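/- Let 0 < ε < 1/2 and 0 < M < 4, and set Δ := 10√ε / (4 − M). There exists S₀ < ∞, depending only on ε and M, with the following property: for every T > 0, every λ : [0,T'] → ℝ (T' ≥ T) with ‖λ‖_{1/2} ≤ 4 + 2ε, and every real x ≠ λ(0) captured by λ at time T (i.e. the real solution g_t(x) of ∂_t g_t(x) = 2/(g_t(x) − λ(t)), g_0(x) = x, exists on [0,T) and g_t(x) − λ(t) → 0 as t → T⁻), and for every s ≥ S₀, the time interval [(1 − e^{−s})T, (1 − e^{−(s+Δ)})T] contains a time t with |λ(T) − λ(t)| ≥ M√(T − t). Moreover, if x > λ(0), then this t can be chosen with λ(T) − λ(t) ≥ M√(T − t). -/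

import Mathlib

/-!
In the coordinates `σ = -log (1 - t/T)`, the normalized distances
`V = (λ(T) - g_t)/√(T - t)` and `U = (g_t - λ(t))/√(T - t)` of the captured point satisfy the
autonomous equation `dV/dσ = V/2 - 2/U`, while `U + V = (λ(T) - λ(t))/√(T - t) ≤ c := 4 + 2ε`.
Hence `dV/dσ ≤ -(V² - cV + 4)/(2(c - V))`. The quadratic is positive outside
`[c/2 - a, c/2 + a]` for `a = 9√ε/4`, so `V` never falls below `c/2 - a` (it would be driven to
negative values) and stays below `c/2 + a` from a time `S₀` on that depends on `ε` only. If
`U + V ≤ M` held on a whole σ-window of length `Δ`, the same equation would give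
`dV/dσ ≤ -(4 - M)/2` there, and `V` would drop by `(4 - M)Δ/2 = 5√ε > 2a` across the window.
Points to the left of `λ(0)` are handled by the reflection `λ ↦ -λ`.
-/

open Set Filter Topology

noncomputable section

/-- `HalfLipOn lam S C` : `lam` is Lip(1/2) on `S` with constant `C`. -/
def HalfLipOn (lam : ℝ → ℝ) (S : Set ℝ) (C : ℝ) : Prop :=
  ∀ s ∈ S, ∀ t ∈ S, |lam t - lam s| ≤ C * Real.sqrt |t - s|

/-- `RealLoewnerSolOn lam x g s` means that the real-valued function `g` solves the chordal
Loewner equation `∂ₜ g t = 2 / (g t - lam t)`, `g 0 = x`, on the time interval `[0, s)`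
(one-sided derivative at `0`). -/
def RealLoewnerSolOn (lam : ℝ → ℝ) (x : ℝ) (g : ℝ → ℝ) (s : ℝ) : Prop :=
  g 0 = x ∧ ∀ t ∈ Set.Ico (0 : ℝ) s,
    g t ≠ lam t ∧ HasDerivWithinAt g (2 / (g t - lam t)) (Set.Ici 0) t

open Real

theorem le_of_hasDerivAt_neg_of_eq {f f' : ℝ → ℝ} {a b K : ℝ} (hab : a ≤ b)
    (hf : ∀ x ∈ Icc a b, HasDerivAt f (f' x) x) (ha : f a ≤ K)
    (hK : ∀ x ∈ Ico a b, f x = K → f' x < 0) : f b ≤ K :=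
  image_le_of_deriv_right_lt_deriv_boundary' (B := fun _ => K) (B' := fun _ => 0)
    (fun x hx => (hf x hx).continuousAt.continuousWithinAt)
    (fun x hx => (hf x (Ico_subset_Icc_self hx)).hasDerivWithinAt) ha continuousOn_const
    (fun _ _ => hasDerivWithinAt_const _ _ _) hK ⟨hab, le_rfl⟩

theorem le_sub_mul_of_hasDerivAt_le {f f' : ℝ → ℝ} {a b ρ : ℝ} (hab : a ≤ b)
    (hf : ∀ x ∈ Icc a b, HasDerivAt f (f' x) x) (hf' : ∀ x ∈ Ico a b, f' x ≤ -ρ) :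
    f b ≤ f a - ρ * (b - a) := by
  have hB : ∀ x, HasDerivAt (fun x => f a - ρ * (x - a)) (-ρ) x := fun x => by
    simpa using (((hasDerivAt_id x).sub_const a).const_mul ρ).const_sub (f a)
  exact image_le_of_deriv_right_le_deriv_boundary
    (fun x hx => (hf x hx).continuousAt.continuousWithinAt)
    (fun x hx => (hf x (Ico_subset_Icc_self hx)).hasDerivWithinAt) (by simp)
    (fun x _ => (hB x).continuousAt.continuousWithinAt) (fun x _ => (hB x).hasDerivWithinAt) hf'
    ⟨hab, le_rfl⟩

theorem half_sub_two_div_le {u y X : ℝ} (hu : 0 < u) (h : u + y ≤ X) :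
    y / 2 - 2 / u ≤ -(y ^ 2 - X * y + 4) / (2 * (X - y)) := by
  have hXy : 0 < X - y := by linarith
  have hdiv : 2 / (X - y) ≤ 2 / u := div_le_div_of_nonneg_left zero_le_two hu (by linarith)
  have e : -(y ^ 2 - X * y + 4) / (2 * (X - y)) = y / 2 - 2 / (X - y) := by
    field_simp
    ring
  linarith

structure IsSelfSimilarFlow (c : ℝ) (U V : ℝ → ℝ) : Prop where
  left_pos : ∀ σ > 0, 0 < U σ
  right_nonneg : ∀ σ > 0, 0 ≤ V σ
  add_le : ∀ σ > 0, U σ + V σ ≤ c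
  hasDerivAt : ∀ σ > 0, HasDerivAt V (V σ / 2 - 2 / U σ) σ

namespace IsSelfSimilarFlow

variable {c : ℝ} {U V : ℝ → ℝ}

theorem deriv_le_neg_div (hf : IsSelfSimilarFlow c U V) {σ P : ℝ} (hσ : 0 < σ) (hP : 0 ≤ P)
    (hPV : P ≤ V σ ^ 2 - c * V σ + 4) : V σ / 2 - 2 / U σ ≤ -(P / (2 * c)) := by
  have hU := hf.left_pos σ hσ
  have hV := hf.right_nonneg σ hσ
  have hUV := hf.add_le σ hσ
  calc V σ / 2 - 2 / U σ ≤ -(V σ ^ 2 - c * V σ + 4) / (2 * (c - V σ)) :=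
        half_sub_two_div_le hU hUV
    _ ≤ -(P / (2 * c)) := by
      rw [neg_div, neg_le_neg_iff]
      exact div_le_div₀ (hP.trans hPV) hPV (by linarith) (by linarith)

theorem deriv_le_of_add_le (hf : IsSelfSimilarFlow c U V) {σ M : ℝ} (hσ : 0 < σ)
    (hM : U σ + V σ ≤ M) : V σ / 2 - 2 / U σ ≤ -((4 - M) / 2) := by
  have hU := hf.left_pos σ hσ
  calc V σ / 2 - 2 / U σ ≤ -(V σ ^ 2 - M * V σ + 4) / (2 * (M - V σ)) :=
        half_sub_two_div_le hU hM
    _ ≤ -((4 - M) / 2) := by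
      rw [neg_div, neg_le_neg_iff, le_div_iff₀ (by linarith)]
      nlinarith [sq_nonneg (V σ - M + 2)]

theorem le_sub_of_forall_add_le (hf : IsSelfSimilarFlow c U V) {s t M : ℝ} (hs : 0 < s)
    (hst : s ≤ t) (hM : ∀ σ ∈ Icc s t, U σ + V σ ≤ M) :
    V t ≤ V s - (4 - M) / 2 * (t - s) :=
  le_sub_mul_of_hasDerivAt_le hst (fun σ hσ => hf.hasDerivAt σ (hs.trans_le hσ.1))
    fun σ hσ => hf.deriv_le_of_add_le (hs.trans_le hσ.1) (hM σ (Ico_subset_Icc_self hσ))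

theorem div_two_sub_le (hf : IsSelfSimilarFlow c U V) {a σ₀ : ℝ} (ha : 0 ≤ a)
    (hca : c ^ 2 / 4 - 4 ≤ a ^ 2) (hσ₀ : 0 < σ₀) : c / 2 - a ≤ V σ₀ := by
  by_contra! hlt
  set K := V σ₀
  have hK0 : 0 ≤ K := hf.right_nonneg σ₀ hσ₀
  have hc : 0 < c := by linarith [hf.left_pos σ₀ hσ₀, hf.add_le σ₀ hσ₀]
  set ρ := (K ^ 2 - c * K + 4) / (2 * c)
  have hP : 0 < K ^ 2 - c * K + 4 := by nlinarith
  have hρ : 0 < ρ := by positivity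
  have hrate : ∀ σ > 0, V σ ≤ K → V σ / 2 - 2 / U σ ≤ -ρ := fun σ hσ hVK =>
    hf.deriv_le_neg_div hσ hP.le (by nlinarith [hf.right_nonneg σ hσ])
  set b := σ₀ + K / ρ + 1
  have hb : σ₀ ≤ b := by have := div_nonneg hK0 hρ.le; linarith
  have hderiv : ∀ σ ∈ Icc σ₀ b, HasDerivAt V (V σ / 2 - 2 / U σ) σ := fun σ hσ =>
    hf.hasDerivAt σ (hσ₀.trans_le hσ.1)
  have htrap : ∀ σ ∈ Icc σ₀ b, V σ ≤ K := fun σ hσ =>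
    le_of_hasDerivAt_neg_of_eq hσ.1 (fun τ hτ => hderiv τ ⟨hτ.1, hτ.2.trans hσ.2⟩) le_rfl
      fun τ hτ hVτ => (hrate τ (hσ₀.trans_le hτ.1) hVτ.le).trans_lt (neg_neg_of_pos hρ)
  have hdrop := le_sub_mul_of_hasDerivAt_le hb hderiv fun σ hσ =>
    hrate σ (hσ₀.trans_le hσ.1) (htrap σ (Ico_subset_Icc_self hσ))
  have e : ρ * (b - σ₀) = K + ρ := by simp only [b]; field_simp; ring
  linarith [hf.right_nonneg b (hσ₀.trans_le hb)]

theorem exists_forall_le_div_two_add {a : ℝ} (hc : 0 < c) (ha : 0 ≤ a)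
    (hca : c ^ 2 / 4 - 4 < a ^ 2) :
    ∃ S > 0, ∀ ⦃U V : ℝ → ℝ⦄, IsSelfSimilarFlow c U V → ∀ σ ≥ S, V σ ≤ c / 2 + a := by
  set K := c / 2 + a with hK
  set ρ := (K ^ 2 - c * K + 4) / (2 * c)
  have hP : 0 < K ^ 2 - c * K + 4 := by
    have e : K ^ 2 - c * K + 4 = a ^ 2 - (c ^ 2 / 4 - 4) := by rw [hK]; ring
    linarith
  have hρ : 0 < ρ := by positivity
  refine ⟨1 + (c + 1) / ρ, by positivity, fun U V hf σ hσ => ?_⟩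
  have hrate : ∀ τ > 0, K ≤ V τ → V τ / 2 - 2 / U τ ≤ -ρ := fun τ hτ hKV =>
    hf.deriv_le_neg_div hτ hP.le
      (by nlinarith [mul_nonneg (sub_nonneg.2 hKV) (show 0 ≤ V τ + K - c by linarith)])
  by_contra! hKσ
  have habove : ∀ τ ∈ Icc 1 σ, K < V τ := by
    intro τ hτ
    by_contra! hVτ
    exact hKσ.not_ge <| le_of_hasDerivAt_neg_of_eq hτ.2
      (fun r hr => hf.hasDerivAt r (by linarith [hτ.1, hr.1])) hVτ
      fun r hr hVr => (hrate r (by linarith [hτ.1, hr.1]) hVr.ge).trans_lt (neg_neg_of_pos hρ)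
  have hS : 1 ≤ 1 + (c + 1) / ρ := by have := div_pos (by linarith : 0 < c + 1) hρ; linarith
  have hdrop := le_sub_mul_of_hasDerivAt_le hS (fun τ hτ => hf.hasDerivAt τ (by linarith [hτ.1]))
    fun τ hτ => hrate τ (by linarith [hτ.1]) (habove τ ⟨hτ.1, hτ.2.le.trans hσ⟩).le
  have e : ρ * (1 + (c + 1) / ρ - 1) = c + 1 := by field_simp; ring
  linarith [hf.right_nonneg (1 + (c + 1) / ρ) (by linarith), hf.left_pos 1 one_pos,
    hf.add_le 1 one_pos]

theorem exists_lt_add (hf : IsSelfSimilarFlow c U V) {a s Δ M : ℝ} (hs : 0 < s) (hΔ : 0 ≤ Δ)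
    (ha : 0 ≤ a) (hca : c ^ 2 / 4 - 4 ≤ a ^ 2) (hVs : V s ≤ c / 2 + a)
    (hΔa : 2 * a < (4 - M) / 2 * Δ) : ∃ σ ∈ Icc s (s + Δ), M < U σ + V σ := by
  by_contra! hsmall
  have hdrop := hf.le_sub_of_forall_add_le hs (by linarith) hsmall
  rw [add_sub_cancel_left] at hdrop
  linarith [hf.div_two_sub_le ha hca (by linarith : 0 < s + Δ)]

end IsSelfSimilarFlow

theorem HalfLipOn.mono {lam : ℝ → ℝ} {S S' : Set ℝ} {C : ℝ} (h : HalfLipOn lam S C)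
    (hS : S' ⊆ S) : HalfLipOn lam S' C :=
  fun s hs t ht => h s (hS hs) t (hS ht)

theorem HalfLipOn.neg {lam : ℝ → ℝ} {S : Set ℝ} {C : ℝ} (h : HalfLipOn lam S C) :
    HalfLipOn (fun t => -lam t) S C := fun s hs t ht => by
  rw [show -lam t - -lam s = -(lam t - lam s) by ring, abs_neg]
  exact h s hs t ht

theorem HalfLipOn.continuousOn {lam : ℝ → ℝ} {S : Set ℝ} {C : ℝ} (h : HalfLipOn lam S C) :
    ContinuousOn lam S := by
  intro s hs
  rw [ContinuousWithinAt, tendsto_iff_norm_sub_tendsto_zero]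
  have hlim : Tendsto (fun t => C * √|t - s|) (𝓝[S] s) (𝓝 0) := by
    have : Continuous fun t => C * √|t - s| := by fun_prop
    simpa using (this.tendsto s).mono_left nhdsWithin_le_nhds
  exact squeeze_zero' (Eventually.of_forall fun _ => norm_nonneg _)
    (eventually_nhdsWithin_of_forall fun t ht => h s hs t ht) hlim

section Loewner

variable {lam g : ℝ → ℝ} {x T : ℝ}

theorem RealLoewnerSolOn.neg (hg : RealLoewnerSolOn lam x g T) :
    RealLoewnerSolOn (fun t => -lam t) (-x) (fun t => -g t) T := by
  refine ⟨by simp [hg.1], fun t ht => ⟨by simpa using (hg.2 t ht).1, ?_⟩⟩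
  rw [show -g t - -lam t = -(g t - lam t) by ring, div_neg]
  exact (hg.2 t ht).2.neg

theorem RealLoewnerSolOn.continuousOn (hg : RealLoewnerSolOn lam x g T) :
    ContinuousOn g (Ico 0 T) :=
  fun t ht => (hg.2 t ht).2.continuousWithinAt.mono fun _ hs => hs.1

theorem RealLoewnerSolOn.hasDerivAt (hg : RealLoewnerSolOn lam x g T) {t : ℝ}
    (ht : t ∈ Ioo 0 T) : HasDerivAt g (2 / (g t - lam t)) t :=
  (hg.2 t (Ioo_subset_Ico_self ht)).2.hasDerivAt (Ici_mem_nhds ht.1)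

theorem RealLoewnerSolOn.driving_lt (hg : RealLoewnerSolOn lam x g T)
    (hlam : ContinuousOn lam (Ico 0 T)) (hx : lam 0 < x) {t : ℝ} (ht : t ∈ Ico 0 T) :
    lam t < g t := by
  by_contra! hle
  obtain ⟨τ, hτ, hτ0⟩ := isPreconnected_Ico.intermediate_value ht
    ⟨le_rfl, ht.1.trans_lt ht.2⟩ (hg.continuousOn.sub hlam)
    (show (0 : ℝ) ∈ Icc (g t - lam t) (g 0 - lam 0) from ⟨by linarith, by rw [hg.1]; linarith⟩)
  exact (hg.2 τ hτ).1 (sub_eq_zero.1 hτ0)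

theorem RealLoewnerSolOn.monotoneOn (hg : RealLoewnerSolOn lam x g T)
    (hlam : ContinuousOn lam (Ico 0 T)) (hx : lam 0 < x) : MonotoneOn g (Ico 0 T) := by
  refine monotoneOn_of_deriv_nonneg (convex_Ico 0 T) hg.continuousOn ?_ fun t ht => ?_
  · rw [interior_Ico]
    exact fun t ht => (hg.hasDerivAt ht).differentiableAt.differentiableWithinAt
  · rw [interior_Ico] at ht
    rw [(hg.hasDerivAt ht).deriv]
    exact div_nonneg zero_le_two (sub_pos.2 (hg.driving_lt hlam hx (Ioo_subset_Ico_self ht))).le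

theorem RealLoewnerSolOn.le_driving_of_tendsto (hg : RealLoewnerSolOn lam x g T) (hT : 0 < T)
    (hlam : ContinuousOn lam (Icc 0 T)) (hx : lam 0 < x)
    (hcap : Tendsto (fun t => g t - lam t) (𝓝[<] T) (𝓝 0)) {t : ℝ} (ht : t ∈ Ico 0 T) :
    g t ≤ lam T := by
  have hlamT : Tendsto lam (𝓝[<] T) (𝓝 (lam T)) :=
    ((continuousWithinAt_Icc_iff_Iic hT).1 (hlam T ⟨hT.le, le_rfl⟩)).mono Iio_subset_Iic_self
  have hgT : Tendsto g (𝓝[<] T) (𝓝 (lam T)) := by simpa using hcap.add hlamT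
  refine ge_of_tendsto hgT ?_
  filter_upwards [Ioo_mem_nhdsLT ht.2] with τ hτ
  exact hg.monotoneOn (hlam.mono Ico_subset_Icc_self) hx ht ⟨ht.1.trans hτ.1.le, hτ.2⟩ hτ.1.le

end Loewner

def selfSimilar (f : ℝ → ℝ) (L T σ : ℝ) : ℝ :=
  (L - f ((1 - exp (-σ)) * T)) / √(T - (1 - exp (-σ)) * T)

theorem sqrt_sub_one_sub_exp_mul (T σ : ℝ) :
    √(T - (1 - exp (-σ)) * T) = exp (-σ / 2) * √T := by
  rw [show T - (1 - exp (-σ)) * T = exp (-σ) * T by ring, sqrt_mul (exp_pos _).le, ← exp_half]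

theorem sqrt_sub_one_sub_exp_mul_pos {T : ℝ} (hT : 0 < T) (σ : ℝ) :
    0 < √(T - (1 - exp (-σ)) * T) := by
  rw [sqrt_sub_one_sub_exp_mul]
  positivity

theorem mul_sqrt_le_of_le_selfSimilar {f : ℝ → ℝ} {L T σ M : ℝ} (hT : 0 < T)
    (h : M ≤ selfSimilar f L T σ) :
    M * √(T - (1 - exp (-σ)) * T) ≤ L - f ((1 - exp (-σ)) * T) :=
  (le_div_iff₀ (sqrt_sub_one_sub_exp_mul_pos hT σ)).1 h

theorem one_sub_exp_mul_mem_Ioo {T σ : ℝ} (hT : 0 < T) (hσ : 0 < σ) :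
    (1 - exp (-σ)) * T ∈ Ioo 0 T := by
  have h1 : exp (-σ) < 1 := exp_lt_one_iff.2 (by linarith)
  constructor <;> nlinarith [exp_pos (-σ)]

theorem hasDerivAt_selfSimilar {f : ℝ → ℝ} {d L T σ : ℝ}
    (hf : HasDerivAt f d ((1 - exp (-σ)) * T)) :
    HasDerivAt (selfSimilar f L T)
      (selfSimilar f L T σ / 2 - d * √(T - (1 - exp (-σ)) * T)) σ := by
  have hform : selfSimilar f L T = fun σ => (L - f ((1 - exp (-σ)) * T)) * exp (σ / 2) / √T := by
    funext σ
    rw [selfSimilar, sqrt_sub_one_sub_exp_mul, neg_div, exp_neg (σ / 2), div_mul_eq_div_div,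
      div_inv_eq_mul]
  have ht : HasDerivAt (fun σ => (1 - exp (-σ)) * T) (exp (-σ) * T) σ := by
    simpa using (((hasDerivAt_neg σ).exp).const_sub 1).mul_const T
  have hnum := (hf.comp σ ht).const_sub L
  have hexp : HasDerivAt (fun σ => exp (σ / 2)) (exp (σ / 2) * (1 / 2)) σ :=
    ((hasDerivAt_id σ).div_const 2).exp.congr_deriv (by simp)
  rw [hform]
  refine ((hnum.mul hexp).div_const √T).congr_deriv ?_
  have hexp_mul : exp (-σ) * exp (σ / 2) = exp (-σ / 2) := by rw [← exp_add]; ring_nf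
  calc _ = (L - f ((1 - exp (-σ)) * T)) * exp (σ / 2) / √T / 2
        - d * (exp (-σ) * exp (σ / 2)) * (T / √T) := by simp only [Function.comp_apply]; ring
    _ = _ := by rw [hexp_mul, div_sqrt, sqrt_sub_one_sub_exp_mul]; ring

theorem RealLoewnerSolOn.isSelfSimilarFlow {lam g : ℝ → ℝ} {x T c : ℝ}
    (hg : RealLoewnerSolOn lam x g T) (hT : 0 < T) (hlip : HalfLipOn lam (Icc 0 T) c)
    (hx : lam 0 < x) (hcap : Tendsto (fun t => g t - lam t) (𝓝[<] T) (𝓝 0)) :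
    IsSelfSimilarFlow c (fun σ => selfSimilar lam (lam T) T σ - selfSimilar g (lam T) T σ)
      (selfSimilar g (lam T) T) := by
  have hlam := hlip.continuousOn
  have hmem : ∀ σ > 0, (1 - exp (-σ)) * T ∈ Ioo 0 T := fun σ hσ => one_sub_exp_mul_mem_Ioo hT hσ
  have hU : ∀ σ, selfSimilar lam (lam T) T σ - selfSimilar g (lam T) T σ
      = (g ((1 - exp (-σ)) * T) - lam ((1 - exp (-σ)) * T)) / √(T - (1 - exp (-σ)) * T) :=
    fun σ => by simp only [selfSimilar]; ring
  refine ⟨fun σ hσ => ?_, fun σ hσ => ?_, fun σ hσ => ?_, fun σ hσ => ?_⟩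
  · rw [hU]
    exact div_pos (sub_pos.2 (hg.driving_lt (hlam.mono Ico_subset_Icc_self) hx
      (Ioo_subset_Ico_self (hmem σ hσ)))) (sqrt_sub_one_sub_exp_mul_pos hT σ)
  · exact div_nonneg (sub_nonneg.2 (hg.le_driving_of_tendsto hT hlam hx hcap
      (Ioo_subset_Ico_self (hmem σ hσ)))) (sqrt_sub_one_sub_exp_mul_pos hT σ).le
  · obtain ⟨ht0, htT⟩ := hmem σ hσ
    rw [sub_add_cancel, selfSimilar, div_le_iff₀ (sqrt_sub_one_sub_exp_mul_pos hT σ)]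
    calc lam T - lam ((1 - exp (-σ)) * T) ≤ |lam T - lam ((1 - exp (-σ)) * T)| := le_abs_self _
      _ ≤ c * √|T - (1 - exp (-σ)) * T| := hlip _ ⟨ht0.le, htT.le⟩ _ ⟨hT.le, le_rfl⟩
      _ = c * √(T - (1 - exp (-σ)) * T) := by rw [abs_of_pos (by linarith)]
  · refine (hasDerivAt_selfSimilar (hg.hasDerivAt (hmem σ hσ))).congr_deriv ?_
    rw [hU, div_div_eq_mul_div, div_mul_eq_mul_div]

theorem capture_forces_large_oscillation_general
    (ε M : ℝ) (hε0 : 0 < ε) (hε : ε < 1 / 2) (hM : M < 4) :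
    ∃ S₀ : ℝ, ∀ T : ℝ, 0 < T → ∀ T' : ℝ, T ≤ T' → ∀ lam : ℝ → ℝ,
      HalfLipOn lam (Set.Icc 0 T') (4 + 2 * ε) →
      ∀ x : ℝ, x ≠ lam 0 → ∀ g : ℝ → ℝ, RealLoewnerSolOn lam x g T →
      Tendsto (fun t => g t - lam t) (nhdsWithin T (Set.Iio T)) (nhds 0) →
      ∀ s : ℝ, S₀ ≤ s →
        ∃ t ∈ Set.Icc ((1 - Real.exp (-s)) * T)
            ((1 - Real.exp (-(s + 10 * Real.sqrt ε / (4 - M)))) * T),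
          M * Real.sqrt (T - t) ≤ |lam T - lam t| ∧
          (lam 0 < x → M * Real.sqrt (T - t) ≤ lam T - lam t) := by
  have ha : (4 + 2 * ε) ^ 2 / 4 - 4 < (9 / 4 * √ε) ^ 2 := by
    rw [mul_pow, sq_sqrt hε0.le]
    nlinarith
  obtain ⟨S₀, hS₀, hupper⟩ :=
    IsSelfSimilarFlow.exists_forall_le_div_two_add (by positivity) (by positivity) ha
  refine ⟨S₀, fun T hT T' hTT' lam hlip x hx g hg hcap s hs => ?_⟩
  have hright : ∀ (lam : ℝ → ℝ) x g, HalfLipOn lam (Icc 0 T) (4 + 2 * ε) → lam 0 < x →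
      RealLoewnerSolOn lam x g T → Tendsto (fun t => g t - lam t) (𝓝[<] T) (𝓝 0) →
      ∃ t ∈ Icc ((1 - exp (-s)) * T) ((1 - exp (-(s + 10 * √ε / (4 - M)))) * T),
        M * √(T - t) ≤ lam T - lam t := by
    intro lam x g hlip hx hg hcap
    have hf := hg.isSelfSimilarFlow hT hlip hx hcap
    have hΔ : (4 - M) / 2 * (10 * √ε / (4 - M)) = 5 * √ε := by
      field_simp [(by linarith : (0 : ℝ) < 4 - M).ne']
      ring
    obtain ⟨σ, ⟨hsσ, hσΔ⟩, hMσ⟩ := hf.exists_lt_add (Δ := 10 * √ε / (4 - M)) (M := M)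
      (hS₀.trans_le hs) (div_nonneg (by positivity) (by linarith)) (by positivity) ha.le
      (hupper hf s hs) (by rw [hΔ]; linarith [sqrt_pos.2 hε0])
    refine ⟨_, ⟨by gcongr, by gcongr⟩, mul_sqrt_le_of_le_selfSimilar (σ := σ) hT ?_⟩
    simpa using hMσ.le
  have hlipT := hlip.mono (Icc_subset_Icc_right hTT')
  rcases hx.lt_or_gt with hneg | hpos
  · obtain ⟨t, ht, h⟩ := hright _ _ _ hlipT.neg (neg_lt_neg hneg) hg.neg
      (by simpa only [neg_sub_neg, neg_sub, neg_zero] using hcap.neg)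
    exact ⟨t, ht, by rw [abs_sub_comm]; linarith [le_abs_self (lam t - lam T)],
      fun h' => absurd h' hneg.not_gt⟩
  · obtain ⟨t, ht, h⟩ := hright lam x g hlipT hpos hg hcap
    exact ⟨t, ht, h.trans (le_abs_self _), fun _ => h⟩

/-- (Lemma `tail2` of the paper.)  For `0 < ε < 1/2` and `0 < M < 4`, with
`Δ = 10√ε/(4-M)`, there is `S₀ < ∞` depending only on `ε` and `M` such that: whenever
`‖lam‖_{1/2} ≤ 4 + 2ε` on `[0,T']` with `T' ≥ T > 0` and `x ≠ lam 0` is captured by `lam` at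
time `T`, then for every `s ≥ S₀` the interval `[(1-e^{-s})T, (1-e^{-(s+Δ)})T]` contains a
time `t` with `|lam T - lam t| ≥ M √(T-t)`; and if moreover `x > lam 0`, the same `t`
satisfies `lam T - lam t ≥ M √(T-t)`. -/
theorem capture_forces_large_oscillation
    (ε M : ℝ) (hε0 : 0 < ε) (hε : ε < 1 / 2) (hM0 : 0 < M) (hM : M < 4) :
    ∃ S₀ : ℝ, ∀ T : ℝ, 0 < T → ∀ T' : ℝ, T ≤ T' → ∀ lam : ℝ → ℝ,
      HalfLipOn lam (Set.Icc 0 T') (4 + 2 * ε) →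
      ∀ x : ℝ, x ≠ lam 0 → ∀ g : ℝ → ℝ, RealLoewnerSolOn lam x g T →
      Tendsto (fun t => g t - lam t) (nhdsWithin T (Set.Iio T)) (nhds 0) →
      ∀ s : ℝ, S₀ ≤ s →
        ∃ t ∈ Set.Icc ((1 - Real.exp (-s)) * T)
            ((1 - Real.exp (-(s + 10 * Real.sqrt ε / (4 - M)))) * T),
          M * Real.sqrt (T - t) ≤ |lam T - lam t| ∧
          (lam 0 < x → M * Real.sqrt (T - t) ≤ lam T - lam t) :=
  capture_forces_large_oscillation_general ε M hε0 hε hM
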